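/- Let B_θ, B_z, λ, α : (0,∞) → ℝ with B_θ, B_z C¹, and define B(x,y,z) = B_θ(r) e_θ + B_z(r) e_z and B_f⊥(x,y,z) = B_z(r) e_θ − B_θ(r) e_z on the region x²+y² > 0 of ℝ³. Then ∇×B = λ(r) B_f⊥ + α(r) B holds at every point of the region if and only if the ODE system dB_z/dr + α B_θ + λ B_z = 0 and dB_θ/dr + B_θ/r − α B_z + λ B_θ = 0 holds for every r > 0. -/

import Mathlib

open RealInnerProductSpace

/-- The curl `∇×V = (∂₂V₃ − ∂₃V₂, ∂₃V₁ − ∂₁V₃, ∂₁V₂ − ∂₂V₁)` of a vector field on ℝ³. -/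
noncomputable def curl3 (V : EuclideanSpace ℝ (Fin 3) → EuclideanSpace ℝ (Fin 3))
    (x : EuclideanSpace ℝ (Fin 3)) : EuclideanSpace ℝ (Fin 3) :=
  (EuclideanSpace.equiv (Fin 3) ℝ).symm
    ![fderiv ℝ V x (EuclideanSpace.single 1 1) 2 - fderiv ℝ V x (EuclideanSpace.single 2 1) 1,
      fderiv ℝ V x (EuclideanSpace.single 2 1) 0 - fderiv ℝ V x (EuclideanSpace.single 0 1) 2,
      fderiv ℝ V x (EuclideanSpace.single 0 1) 1 - fderiv ℝ V x (EuclideanSpace.single 1 1) 0]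

/-- The cylindrical radius `r = √(x² + y²)`. -/
noncomputable def rad (p : EuclideanSpace ℝ (Fin 3)) : ℝ := Real.sqrt (p 0 ^ 2 + p 1 ^ 2)

/-- The azimuthal unit vector `e_θ = (−y/r, x/r, 0)`. -/
noncomputable def etheta (p : EuclideanSpace ℝ (Fin 3)) : EuclideanSpace ℝ (Fin 3) :=
  (EuclideanSpace.equiv (Fin 3) ℝ).symm ![-(p 1) / rad p, p 0 / rad p, 0]

/-- The vertical unit vector `e_z = (0,0,1)`. -/
noncomputable def ez3 : EuclideanSpace ℝ (Fin 3) := EuclideanSpace.single 2 1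

/-! Since `e_θ = (e_z × x) / r`, the field is `B = g • (e_z × x) + h • e_z` with `g = B_θ(r) / r`
and `h = B_z(r)`, and the product rule gives
`∇×B = (∂_y h − x ∂_z g, −y ∂_z g − ∂_x h, 2g + x ∂_x g + y ∂_y g) = −B_z'(r) e_θ + (B_θ' + B_θ/r) e_z`.
On the other side `λ B_f⊥ + α B = (λB_z + αB_θ) e_θ + (αB_z − λB_θ) e_z`; off the axis `e_θ` and
`e_z` are independent, so the two sides agree at `p` iff the ODE system holds at `r = rad p`, and
every `r > 0` is the radius of some point. -/

local notation "E3" => EuclideanSpace ℝ (Fin 3)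
local notation "pr" i => (EuclideanSpace.proj i : EuclideanSpace ℝ (Fin 3) →L[ℝ] ℝ)
local notation "𝐞" j => (EuclideanSpace.single j 1 : EuclideanSpace ℝ (Fin 3))

noncomputable def ez3Cross : E3 →L[ℝ] E3 :=
  (EuclideanSpace.equiv (Fin 3) ℝ).symm.toContinuousLinearMap ∘L
    ContinuousLinearMap.pi ![-(pr 1), pr 0, 0]

lemma ez3Cross_apply (q : E3) :
    ez3Cross q = (EuclideanSpace.equiv (Fin 3) ℝ).symm ![-(q 1), q 0, 0] := by
  ext i; fin_cases i <;> rfl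

-- Also on the axis, where both sides vanish because `x / 0 = 0`.
lemma etheta_eq_smul_ez3Cross (p : E3) : etheta p = (rad p)⁻¹ • ez3Cross p := by
  ext i; fin_cases i <;> simp [etheta, ez3Cross_apply, div_eq_inv_mul]

lemma rad_pos {p : E3} (hp : 0 < p 0 ^ 2 + p 1 ^ 2) : 0 < rad p := Real.sqrt_pos.mpr hp

lemma rad_sq (p : E3) : rad p ^ 2 = p 0 ^ 2 + p 1 ^ 2 := Real.sq_sqrt (by positivity)

lemma forall_region_iff_forall_pos (P : ℝ → Prop) :
    (∀ p : E3, 0 < p 0 ^ 2 + p 1 ^ 2 → P (rad p)) ↔ ∀ r > 0, P r := by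
  refine ⟨fun h r hr => ?_, fun h p hp => h _ (rad_pos hp)⟩
  have hrad : rad ((EuclideanSpace.equiv (Fin 3) ℝ).symm ![r, 0, 0]) = r := by
    simp [rad, Real.sqrt_sq hr.le]
  rw [← hrad]
  exact h _ (by simpa using pow_pos hr 2)

lemma smul_etheta_add_smul_ez3_inj {p : E3} (hp : 0 < p 0 ^ 2 + p 1 ^ 2) {a b c d : ℝ} :
    a • etheta p + b • ez3 = c • etheta p + d • ez3 ↔ a = c ∧ b = d := by
  refine ⟨fun h => ?_, fun ⟨hac, hbd⟩ => hac ▸ hbd ▸ rfl⟩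
  have h0 := congrArg (· 0) h
  have h1 := congrArg (· 1) h
  have h2 := congrArg (· 2) h
  simp [etheta, ez3] at h0 h1 h2
  refine ⟨by_contra fun hac => ?_, h2⟩
  simp [hac, (rad_pos hp).ne'] at h0 h1
  simp [h0, h1] at hp

lemma hasFDerivAt_rad {p : E3} (hp : 0 < p 0 ^ 2 + p 1 ^ 2) :
    HasFDerivAt rad ((rad p)⁻¹ • (p 0 • (pr 0) + p 1 • (pr 1))) p := by
  have hsq : HasFDerivAt (fun q : E3 => q 0 ^ 2 + q 1 ^ 2)
      ((2 * p 0) • (pr 0) + (2 * p 1) • (pr 1)) p :=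
    (((pr 0).hasFDerivAt.pow 2).add ((pr 1).hasFDerivAt.pow 2)).congr_fderiv (by ext v; simp)
  refine (hsq.sqrt hp.ne').congr_fderiv ?_
  ext v; simp [rad]; field_simp

lemma curl3_smul_ez3Cross_add_smul_ez3 {g h : E3 → ℝ} {G H : E3 →L[ℝ] ℝ} {p : E3}
    (hg : HasFDerivAt g G p) (hh : HasFDerivAt h H p) :
    curl3 (fun q => g q • ez3Cross q + h q • ez3) p = (EuclideanSpace.equiv (Fin 3) ℝ).symm
      ![H (𝐞 1) - p 0 * G (𝐞 2), -(p 1 * G (𝐞 2)) - H (𝐞 0),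
        2 * g p + p 0 * G (𝐞 0) + p 1 * G (𝐞 1)] := by
  have hD : HasFDerivAt (fun q => g q • ez3Cross q + h q • ez3) _ p :=
    (hg.smul ez3Cross.hasFDerivAt).add (hh.smul_const ez3)
  rw [curl3, hD.fderiv]
  ext i; fin_cases i <;> simp [ez3Cross_apply, ez3] <;> ring

lemma curl3_cylindrical {Bθ Bz : ℝ → ℝ} {p : E3} {Bθ' Bz' : ℝ} (hp : 0 < p 0 ^ 2 + p 1 ^ 2)
    (hBθ : HasDerivAt Bθ Bθ' (rad p)) (hBz : HasDerivAt Bz Bz' (rad p)) :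
    curl3 (fun q => Bθ (rad q) • etheta q + Bz (rad q) • ez3) p =
      (-Bz') • etheta p + (Bθ' + Bθ (rad p) / rad p) • ez3 := by
  have hfield : (fun q => Bθ (rad q) • etheta q + Bz (rad q) • ez3) =
      fun q => (Bθ (rad q) / rad q) • ez3Cross q + Bz (rad q) • ez3 := by
    funext q; rw [etheta_eq_smul_ez3Cross, smul_smul, div_eq_mul_inv]
  have hr := rad_pos hp
  have hR := hasFDerivAt_rad hp
  have hg : HasFDerivAt (fun q => Bθ (rad q) / rad q) _ p :=
    (hBθ.div (hasDerivAt_id _) hr.ne').comp_hasFDerivAt p hR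
  have hh : HasFDerivAt (fun q => Bz (rad q)) _ p := hBz.comp_hasFDerivAt p hR
  rw [hfield, curl3_smul_ez3Cross_add_smul_ez3 hg hh]
  ext i; fin_cases i <;> simp [etheta, ez3]
  · ring
  · left; ring
  · field_simp
    linear_combination (Bθ (rad p) - rad p * Bθ') * rad_sq p

/-- for `B = B_θ(r)e_θ + B_z(r)e_z` and `B_f⊥ = B_z(r)e_θ − B_θ(r)e_z`,
the decomposition `∇×B = λ(r) B_f⊥ + α(r) B` holds on the region `x² + y² > 0` iff the
ODE system `B_z' + αB_θ + λB_z = 0`, `B_θ' + B_θ/r − αB_z + λB_θ = 0` holds for all `r > 0`. -/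
theorem stmt_13 (Bθ Bz Bθ' Bz' lam alp : ℝ → ℝ)
    (hBθ : ∀ r > (0:ℝ), HasDerivAt Bθ (Bθ' r) r)
    (hBz : ∀ r > (0:ℝ), HasDerivAt Bz (Bz' r) r)
    (B Bf : EuclideanSpace ℝ (Fin 3) → EuclideanSpace ℝ (Fin 3))
    (hB : ∀ p, B p = Bθ (rad p) • etheta p + Bz (rad p) • ez3)
    (hBf : ∀ p, Bf p = Bz (rad p) • etheta p - Bθ (rad p) • ez3) :
    (∀ p : EuclideanSpace ℝ (Fin 3), 0 < p 0 ^ 2 + p 1 ^ 2 →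
        curl3 B p = lam (rad p) • Bf p + alp (rad p) • B p) ↔
    (∀ r > (0:ℝ), Bz' r + alp r * Bθ r + lam r * Bz r = 0 ∧
        Bθ' r + Bθ r / r - alp r * Bz r + lam r * Bθ r = 0) := by
  refine (forall₂_congr fun p hp => ?_).trans (forall_region_iff_forall_pos _)
  have hr := rad_pos hp
  have hcurl :
      curl3 B p = (-Bz' (rad p)) • etheta p + (Bθ' (rad p) + Bθ (rad p) / rad p) • ez3 := by
    rw [funext hB]; exact curl3_cylindrical hp (hBθ _ hr) (hBz _ hr)
  have hforce : lam (rad p) • Bf p + alp (rad p) • B p =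
      (lam (rad p) * Bz (rad p) + alp (rad p) * Bθ (rad p)) • etheta p +
        (alp (rad p) * Bz (rad p) - lam (rad p) * Bθ (rad p)) • ez3 := by
    rw [hB, hBf]; module
  rw [hcurl, hforce, smul_etheta_add_smul_ez3_inj hp]
  constructor <;> rintro ⟨h₁, h₂⟩ <;> constructor <;> linarith
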